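/- arXiv:0907.3126 — 2 statements merged into one kernel-verified Lean document; each statement's English description precedes it below -/
import Mathlib

section
/- For the Pavlov dynamics of the prisoner's dilemma on a connected graph G = (V,E) with no isolated vertex, given by the rules CC → CC, CD → DD, DC → DD, DD → CC applied to the endpoints of an edge: the all-C configuration is the unique fixed point (a configuration from which no rule changes any state), and from every configuration there is a finite sequence of rule applications reaching the all-C configuration. -/
/-- Pavlov dynamics of the prisoner's dilemma on a graph, with `false = C` and
`true = D`: a step picks an edge `{i, j}` and applies the rules CC → CC,
CD → DD, DC → DD, DD → CC to its endpoints (both endpoints get `xor (c i) (c j)`). -/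
def PDStep {V : Type*} [DecidableEq V] (G : SimpleGraph V) (c c' : V → Bool) : Prop :=
  ∃ i j : V, G.Adj i j ∧
    c' = fun v => if v = i ∨ v = j then xor (c i) (c j) else c v

/-- On a connected graph with no isolated vertex, the all-C configuration is the
unique fixed point of the Pavlov dynamics, and it is reachable from every
configuration by finitely many rule applications. -/
theorem stmt16 {V : Type*} [Fintype V] [DecidableEq V] (G : SimpleGraph V)
    (hconn : G.Connected) (hniso : ∀ v : V, ∃ w : V, G.Adj v w) :
    (∀ c : V → Bool, (∀ c', PDStep G c c' → c' = c) ↔ c = fun _ => false) ∧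
    (∀ c : V → Bool, Relation.ReflTransGen (PDStep G) c (fun _ => false)) := by
  constructor
  · intro c
    constructor
    · intro h
      by_contra hc
      have hex : ∃ v, c v = true := by
        by_contra h'
        push_neg at h'
        exact hc (funext fun v => by simpa using h' v)
      obtain ⟨v, hv⟩ := hex
      obtain ⟨w, hw⟩ := hniso v
      have hstep : PDStep G c (fun u => if u = v ∨ u = w then xor (c v) (c w) else c u) :=
        ⟨v, w, hw, rfl⟩
      have heq := h _ hstep
      cases hcw : c w with
      | false =>
        have := congrFun heq w
        simp [hv, hcw] at this
      | true =>
        have := congrFun heq v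
        simp [hv, hcw] at this
    · rintro rfl c' ⟨i, j, hij, rfl⟩
      funext u
      by_cases h : u = i ∨ u = j <;> simp [h]
  · intro c
    generalize hn : (Finset.univ.filter (fun v => c v = true)).card = n
    induction n using Nat.strong_induction_on generalizing c with
    | _ n ih =>
      by_cases h0 : ∀ v, c v = false
      · have : c = fun _ => false := funext h0
        rw [this]
      · push_neg at h0
        obtain ⟨v, hv'⟩ := h0
        have hv : c v = true := by simpa using hv'
        obtain ⟨w, hw⟩ := hniso v
        have hvw : v ≠ w := G.ne_of_adj hw
        have hsub : ∀ (c3 : V → Bool), (∀ u, c3 u = if u = v ∨ u = w then false else c u) →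
            (Finset.univ.filter (fun u => c3 u = true)).card <
              (Finset.univ.filter (fun u => c u = true)).card := by
          intro c3 hc3
          apply Finset.card_lt_card
          constructor
          · intro u hu
            simp only [Finset.mem_filter, Finset.mem_univ, true_and] at hu ⊢
            rw [hc3 u] at hu
            by_cases h : u = v ∨ u = w
            · simp [h] at hu
            · simpa [h] using hu
          · intro hsub'
            have hvmem : v ∈ Finset.univ.filter (fun u => c u = true) := by simp [hv]
            have := hsub' hvmem
            simp only [Finset.mem_filter, Finset.mem_univ, true_and] at this
            rw [hc3 v] at this
            simp at this
        cases hcw : c w with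
        | true =>
          set c2 : V → Bool := fun u => if u = v ∨ u = w then false else c u with hc2
          have hstep : PDStep G c c2 :=
            ⟨v, w, hw, by funext u; simp [hc2, hv, hcw]⟩
          have hcard := hsub c2 (fun u => rfl)
          rw [hn] at hcard
          exact Relation.ReflTransGen.head hstep (ih _ hcard c2 rfl)
        | false =>
          set c2 : V → Bool := fun u => if u = v ∨ u = w then true else c u with hc2
          set c3 : V → Bool := fun u => if u = v ∨ u = w then false else c u with hc3
          have hstep1 : PDStep G c c2 :=
            ⟨v, w, hw, by funext u; simp [hc2, hv, hcw]⟩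
          have hstep2 : PDStep G c2 c3 := by
            refine ⟨v, w, hw, ?_⟩
            have hv2 : c2 v = true := by simp [hc2]
            have hw2 : c2 w = true := by simp [hc2]
            simp only [hv2, hw2, Bool.xor_self]
            funext u
            by_cases h : u = v ∨ u = w
            · simp only [hc3, if_pos h]
            · simp only [hc3, hc2, if_neg h]
          have hcard := hsub c3 (fun u => rfl)
          rw [hn] at hcard
          exact Relation.ReflTransGen.head hstep1
            (Relation.ReflTransGen.head hstep2 (ih _ hcard c3 rfl))
end

section
/- If a deterministic symmetric population protocol has a state q with rule qq → qq and computes a predicate p on multisets over {0, σ} such that {σ,σ} →* {q,q} via repeated self-interactions, then p({σ,σ}) = p({σ,σ,σ,σ}). -/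
def Step {Q : Type*} (δ : Q → Q → Q × Q) (c c' : Multiset Q) : Prop :=
  ∃ q₁ q₂ rest, c = q₁ ::ₘ q₂ ::ₘ rest ∧ c' = (δ q₁ q₂).1 ::ₘ (δ q₁ q₂).2 ::ₘ rest

def IsFair {Q : Type*} (δ : Q → Q → Q × Q) (exec : ℕ → Multiset Q) : Prop :=
  ∀ c c' : Multiset Q, (∀ n, ∃ m, n ≤ m ∧ exec m = c) → Step δ c c' →
    ∀ n, ∃ m, n ≤ m ∧ exec m = c'

/-- The protocol `(δ, ι, ω)` computes the predicate `p` on input multisets. -/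
def Computes {Q S : Type*} (δ : Q → Q → Q × Q) (ι : S → Q) (ω : Q → Bool)
    (p : Multiset S → Bool) : Prop :=
  ∀ (I : Multiset S) (exec : ℕ → Multiset Q),
    exec 0 = I.map ι → (∀ n, Step δ (exec n) (exec (n + 1))) → IsFair δ exec →
    ∃ N, ∀ n, N ≤ n → ∀ q ∈ exec n, ω q = p I

lemma step_const {Q : Type*} (δ : Q → Q → Q × Q) (q : Q) (hfix : δ q q = (q, q))
    (c c' : Multiset Q) (hall : ∀ x ∈ c, x = q) (h : Step δ c c') : c' = c := by
  obtain ⟨q₁, q₂, rest, hc, hc'⟩ := h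
  have h1 : q₁ = q := hall _ (by simp [hc])
  have h2 : q₂ = q := hall _ (by simp [hc])
  subst h1 h2
  rw [hc', hfix] at *
  rw [hc]

lemma fair_of_eventually {Q : Type*} (δ : Q → Q → Q × Q) (q : Q)
    (hfix : δ q q = (q, q)) (exec : ℕ → Multiset Q) (N : ℕ) (c₀ : Multiset Q)
    (hall : ∀ x ∈ c₀, x = q) (hev : ∀ n, N ≤ n → exec n = c₀) :
    IsFair δ exec := by
  intro c c' hrec hstep n
  obtain ⟨m, hm, hmc⟩ := hrec (max n N)
  have hc : c = c₀ := by rw [← hmc]; exact hev m (le_trans (le_max_right _ _) hm)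
  have hc' : c' = c₀ := by
    rw [← hc]; exact step_const δ q hfix c c' (hc ▸ hall) hstep
  exact ⟨max n N, le_max_left _ _, by rw [hev _ (le_max_right _ _), hc']⟩

/-- If a deterministic symmetric protocol over the input alphabet `{0, σ}`
(encoded as `Bool` with `σ = true`) has a state `q` with rule `qq → qq` which is
reached from `σ` by iterating the self-interaction map, and the protocol computes
`p`, then `p {σ,σ} = p {σ,σ,σ,σ}`. -/
theorem stmt19 {Q : Type*} [Fintype Q] (δ : Q → Q → Q × Q)
    (hsym : ∀ q₁ q₂ : Q, δ q₂ q₁ = ((δ q₁ q₂).2, (δ q₁ q₂).1))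
    (ι : Bool → Q) (ω : Q → Bool) (p : Multiset Bool → Bool)
    (q : Q) (hfix : δ q q = (q, q))
    (hreach : ∃ n : ℕ, (fun r => (δ r r).1)^[n] (ι true) = q)
    (hcomp : Computes δ ι ω p) :
    p {true, true} = p {true, true, true, true} := by
  obtain ⟨N, hN⟩ := hreach
  set f : Q → Q := fun r => (δ r r).1 with hf
  set g : ℕ → Q := fun n => f^[n] (ι true) with hg
  have hself : ∀ r, δ r r = (f r, f r) := by
    intro r
    have h := hsym r r
    have h1 : (δ r r).1 = (δ r r).2 := by
      conv_lhs => rw [h]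
    exact Prod.ext rfl h1.symm
  have hfq : f q = q := by simp [hf, hfix]
  have hgq : ∀ n, N ≤ n → g n = q := by
    intro n hn
    have hgN : g N = q := hN
    have : g n = f^[n - N] (g N) := by
      show f^[n] (ι true) = f^[n - N] (f^[N] (ι true))
      rw [← Function.iterate_add_apply]
      congr 1
      omega
    rw [this, hgN, Function.iterate_fixed hfq]
  have hgsucc : ∀ n, g (n + 1) = f (g n) := by
    intro n; rw [hg]; simp [Function.iterate_succ_apply']
  -- Execution 1: {g n, g n}
  set exec1 : ℕ → Multiset Q := fun n => g n ::ₘ {g n} with he1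
  have h10 : exec1 0 = ({true, true} : Multiset Bool).map ι := by
    simp [he1, hg]
  have h1s : ∀ n, Step δ (exec1 n) (exec1 (n + 1)) := by
    intro n
    exact ⟨g n, g n, 0, by simp [he1], by simp [he1, hself, hgsucc]⟩
  have h1f : IsFair δ exec1 := by
    apply fair_of_eventually δ q hfix exec1 N (q ::ₘ {q})
    · intro x hx; simp at hx; tauto
    · intro n hn; simp [he1, hgq n hn]
  obtain ⟨M₁, hM₁⟩ := hcomp {true, true} exec1 h10 h1s h1f
  -- Execution 2
  set exec2 : ℕ → Multiset Q :=
    fun n => g ((n + 1) / 2) ::ₘ g ((n + 1) / 2) ::ₘ g (n / 2) ::ₘ {g (n / 2)} with he2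
  have h20 : exec2 0 = ({true, true, true, true} : Multiset Bool).map ι := by
    simp [he2, hg]
  have h2s : ∀ n, Step δ (exec2 n) (exec2 (n + 1)) := by
    intro n
    rcases Nat.even_or_odd n with ⟨k, hk⟩ | ⟨k, hk⟩
    · subst hk
      have e1 : (k + k + 1) / 2 = k := by omega
      have e2 : (k + k) / 2 = k := by omega
      have e3 : (k + k + 1 + 1) / 2 = k + 1 := by omega
      refine ⟨g k, g k, g k ::ₘ {g k}, ?_, ?_⟩
      · simp [he2, e1, e2]
      · simp [he2, e1, e3, hself, hgsucc]
    · subst hk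
      have e1 : (2 * k + 1 + 1) / 2 = k + 1 := by omega
      have e2 : (2 * k + 1) / 2 = k := by omega
      have e3 : (2 * k + 1 + 1 + 1) / 2 = k + 1 := by omega
      refine ⟨g k, g k, g (k + 1) ::ₘ {g (k + 1)}, ?_, ?_⟩
      · simp only [he2, e1, e2]
        classical
        ext x
        simp [Multiset.count_cons, Multiset.count_singleton]
        split_ifs <;> omega
      · simp [he2, e1, e3, hself, hgsucc]
  have h2f : IsFair δ exec2 := by
    apply fair_of_eventually δ q hfix exec2 (2 * N) (q ::ₘ q ::ₘ q ::ₘ {q})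
    · intro x hx; simp at hx; tauto
    · intro n hn
      simp [he2, hgq ((n + 1) / 2) (by omega), hgq (n / 2) (by omega)]
  obtain ⟨M₂, hM₂⟩ := hcomp {true, true, true, true} exec2 h20 h2s h2f
  have k1 : ω q = p {true, true} := by
    have := hM₁ (max M₁ N) (le_max_left _ _) q
      (by simp [he1, hgq (max M₁ N) (le_max_right _ _)])
    exact this
  have k2 : ω q = p {true, true, true, true} := by
    set m := max M₂ N with hm
    have e1 : (2 * m + 1) / 2 = m := by omega
    have e2 : 2 * m / 2 = m := by omega
    have hmN : N ≤ m := le_max_right _ _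
    have hmM : M₂ ≤ 2 * m := by have := le_max_left M₂ N; omega
    exact hM₂ (2 * m) hmM q (by simp [he2, e1, e2, hgq m hmN])
  rw [← k1, k2]
end
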